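/- Let n ≥ 1 be an integer and let x, y, z ≥ 0 be real numbers satisfying ∫_x^∞ e^{-t} t^{n−1} dt ≤ (1/2)·(n−1)!, ∫_0^y e^{-t} t^{n−1} dt ≥ (1/2)·(n−1)!, and ∫_x^∞ e^{-t} t^{n−1} dt + ∫_0^y e^{-t} t^{n−1} dt = ∫_0^z e^{-t} t^{n−1} dt. Then e^{-x} x^{n−1} + e^{-y} y^{n−1} ≥ e^{-z} z^{n−1}. -/

import Mathlib

open MeasureTheory Real Set

/-
With `k = n - 1` and `f t = e^{-t} t^k` (the Gamma(k+1) density up to the factor `k!`), the key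
fact is that the median of `f` is at least its mode `k`: reflecting `[0, k]` onto `[k, 2k]` about
`k` does not decrease `f`, which after scaling `t = k (1 ± u)` is `(1 - u) e^{2u} ≤ 1 + u`, i.e.
`artanh u ≥ u`. Hence `∫_0^y f ≥ k!/2` forces `y ≥ k`, the equation forces `z ≥ y` because the
tail over `(x, ∞)` is nonnegative, and `f` decreases on `[k, ∞)`, so `f z ≤ f y ≤ f x + f y`.
-/

theorem two_mul_le_log_one_add_sub_log_one_sub {u : ℝ} (h₀ : 0 ≤ u) (h₁ : u < 1) :
    2 * u ≤ log (1 + u) - log (1 - u) := by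
  have hu : |u| < 1 := by rwa [abs_of_nonneg h₀]
  simpa using le_hasSum (hasSum_log_sub_log_of_abs_lt_one hu) 0 fun j _ => by positivity

theorem one_sub_mul_exp_two_mul_le {u : ℝ} (hu : 0 ≤ u) : (1 - u) * exp (2 * u) ≤ 1 + u := by
  rcases lt_or_ge u 1 with h₁ | h₁
  · have hpos : 0 < 1 - u := by linarith
    calc (1 - u) * exp (2 * u) ≤ (1 - u) * exp (log (1 + u) - log (1 - u)) := by
          gcongr; exact two_mul_le_log_one_add_sub_log_one_sub hu h₁
      _ = 1 + u := by
          rw [exp_sub, exp_log (by linarith), exp_log hpos]; field_simp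
  · nlinarith [exp_pos (2 * u)]

theorem exp_neg_mul_pow_sub_le_add (k : ℕ) {s : ℝ} (h₀ : 0 ≤ s) (hs : s ≤ k) :
    exp (-(k - s)) * (k - s) ^ k ≤ exp (-(k + s)) * (k + s) ^ k := by
  rcases k.eq_zero_or_pos with rfl | hk
  · simp [le_antisymm (by exact_mod_cast hs) h₀]
  have hk : (0 : ℝ) < k := by exact_mod_cast hk
  have hexp : exp (2 * s) = exp (2 * (s / k)) ^ k := by
    rw [← exp_nat_mul]; field_simp
  have hbase : (k - s) * exp (2 * (s / k)) ≤ k + s := by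
    have := one_sub_mul_exp_two_mul_le (div_nonneg h₀ hk.le)
    calc (k - s) * exp (2 * (s / k)) = k * ((1 - s / k) * exp (2 * (s / k))) := by field_simp
      _ ≤ k * (1 + s / k) := by gcongr
      _ = k + s := by field_simp
  calc exp (-(k - s)) * (k - s) ^ k = exp (-(k + s)) * ((k - s) * exp (2 * (s / k))) ^ k := by
        rw [mul_pow, ← hexp, show -(k - s) = -(k + s) + 2 * s by ring, exp_add]; ring
    _ ≤ exp (-(k + s)) * (k + s) ^ k := by gcongr

theorem exp_neg_mul_pow_antitoneOn (k : ℕ) :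
    AntitoneOn (fun t : ℝ => exp (-t) * t ^ k) (Ici k) := by
  intro a ha b _ hab
  simp only [mem_Ici] at ha
  rcases ((Nat.cast_nonneg k).trans ha).eq_or_lt with rfl | ha₀
  · obtain rfl : k = 0 := by exact_mod_cast le_antisymm ha (Nat.cast_nonneg k)
    simpa using hab
  have hpow : (b / a) ^ k ≤ exp (b - a) := calc
    (b / a) ^ k ≤ exp (b / a - 1) ^ k := by
        gcongr
        · exact div_nonneg (by linarith) ha₀.le
        · linarith [add_one_le_exp (b / a - 1)]
    _ = exp (k / a * (b - a)) := by rw [← exp_nat_mul]; field_simp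
    _ ≤ exp (b - a) := by
        gcongr
        exact mul_le_of_le_one_left (by linarith) ((div_le_one ha₀).2 ha)
  calc exp (-b) * b ^ k = exp (-b) * a ^ k * (b / a) ^ k := by
        rw [div_pow, mul_assoc, mul_div_cancel₀ _ (by positivity)]
    _ ≤ exp (-b) * a ^ k * exp (b - a) := by gcongr
    _ = exp (-a) * a ^ k := by rw [mul_right_comm, ← exp_add]; ring_nf

section GammaIntegrand

variable (k : ℕ)

theorem continuous_exp_neg_mul_pow : Continuous fun t : ℝ => exp (-t) * t ^ k := by
  fun_prop

theorem integrableOn_exp_neg_mul_pow_Ioi :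
    IntegrableOn (fun t : ℝ => exp (-t) * t ^ k) (Ioi 0) := by
  simpa [rpow_natCast] using GammaIntegral_convergent (s := k + 1) (by positivity)

theorem integral_exp_neg_mul_pow_Ioi :
    ∫ t in Ioi (0 : ℝ), exp (-t) * t ^ k = (Nat.factorial k : ℝ) := by
  simpa [rpow_natCast, Gamma_nat_eq_factorial] using
    (Gamma_eq_integral (s := k + 1) (by positivity)).symm

theorem intervalIntegral_add_integral_Ioi_exp_neg_mul_pow {a : ℝ} (ha : 0 ≤ a) :
    (∫ t in (0 : ℝ)..a, exp (-t) * t ^ k) + ∫ t in Ioi a, exp (-t) * t ^ k =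
      (Nat.factorial k : ℝ) := by
  have hint := integrableOn_exp_neg_mul_pow_Ioi k
  rw [intervalIntegral.integral_of_le ha, ← setIntegral_union (Ioc_disjoint_Ioi le_rfl)
    measurableSet_Ioi (hint.mono_set Ioc_subset_Ioi_self) (hint.mono_set (Ioi_subset_Ioi ha)),
    Ioc_union_Ioi_eq_Ioi ha, integral_exp_neg_mul_pow_Ioi]

theorem integral_Ioi_exp_neg_mul_pow_nonneg {a : ℝ} (ha : 0 ≤ a) :
    0 ≤ ∫ t in Ioi a, exp (-t) * t ^ k :=
  setIntegral_nonneg measurableSet_Ioi fun t ht => by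
    have : 0 ≤ t := ha.trans (le_of_lt ht)
    positivity

theorem strictMonoOn_intervalIntegral_exp_neg_mul_pow :
    StrictMonoOn (fun a : ℝ => ∫ t in (0 : ℝ)..a, exp (-t) * t ^ k) (Ici 0) := by
  intro a ha b _ hab
  have hint : ∀ c d : ℝ, IntervalIntegrable (fun t : ℝ => exp (-t) * t ^ k) volume c d :=
    fun c d => (continuous_exp_neg_mul_pow k).intervalIntegrable c d
  rw [← sub_pos, intervalIntegral.integral_interval_sub_left (hint 0 b) (hint 0 a)]
  refine intervalIntegral.intervalIntegral_pos_of_pos_on (hint a b) (fun t ht => ?_) hab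
  have : 0 < t := lt_of_le_of_lt ha ht.1
  positivity

theorem intervalIntegral_exp_neg_mul_pow_le_half_factorial :
    ∫ t in (0 : ℝ)..k, exp (-t) * t ^ k ≤ 1 / 2 * (Nat.factorial k : ℝ) := by
  set f : ℝ → ℝ := fun t => exp (-t) * t ^ k
  have hk : (0 : ℝ) ≤ k := Nat.cast_nonneg k
  have hreflect : ∫ t in (0 : ℝ)..k, f t ≤ ∫ t in (k : ℝ)..2 * k, f t := calc
    ∫ t in (0 : ℝ)..k, f t = ∫ t in (k : ℝ)..2 * k, f (2 * k - t) := by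
        rw [intervalIntegral.integral_comp_sub_left f]; ring_nf
    _ ≤ ∫ t in (k : ℝ)..2 * k, f t := by
        refine intervalIntegral.integral_mono_on (by linarith)
          (((continuous_exp_neg_mul_pow k).comp (by fun_prop)).intervalIntegrable _ _)
          ((continuous_exp_neg_mul_pow k).intervalIntegrable _ _) fun t ht => ?_
        have := exp_neg_mul_pow_sub_le_add k (s := t - k) (by linarith [ht.1])
          (by linarith [ht.2])
        rwa [show (k : ℝ) - (t - k) = 2 * k - t by ring, show (k : ℝ) + (t - k) = t by ring]
          at this
  have htail : ∫ t in (k : ℝ)..2 * k, f t ≤ ∫ t in Ioi (k : ℝ), f t := by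
    rw [intervalIntegral.integral_of_le (by linarith)]
    refine setIntegral_mono_set
      ((integrableOn_exp_neg_mul_pow_Ioi k).mono_set (Ioi_subset_Ioi hk))
      ?_ Ioc_subset_Ioi_self.eventuallyLE
    filter_upwards [ae_restrict_mem measurableSet_Ioi] with t ht
    have : 0 ≤ t := hk.trans (le_of_lt ht)
    positivity
  linarith [intervalIntegral_add_integral_Ioi_exp_neg_mul_pow k hk]

end GammaIntegrand

theorem mixed_boundary_superadditive_general (n : ℕ) (x y z : ℝ)
    (hx : 0 ≤ x) (hy : 0 ≤ y) (hz : 0 ≤ z)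
    (hyge : (1 / 2 : ℝ) * (Nat.factorial (n - 1) : ℝ)
      ≤ ∫ t in (0:ℝ)..y, Real.exp (-t) * t ^ (n - 1))
    (heq : (∫ t in Set.Ioi x, Real.exp (-t) * t ^ (n - 1))
        + ∫ t in (0:ℝ)..y, Real.exp (-t) * t ^ (n - 1)
      = ∫ t in (0:ℝ)..z, Real.exp (-t) * t ^ (n - 1)) :
    Real.exp (-z) * z ^ (n - 1)
      ≤ Real.exp (-x) * x ^ (n - 1) + Real.exp (-y) * y ^ (n - 1) := by
  have hF := strictMonoOn_intervalIntegral_exp_neg_mul_pow (n - 1)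
  have hky : ((n - 1 : ℕ) : ℝ) ≤ y :=
    (hF.le_iff_le (mem_Ici.2 (Nat.cast_nonneg _)) (mem_Ici.2 hy)).1 <|
      (intervalIntegral_exp_neg_mul_pow_le_half_factorial (n - 1)).trans hyge
  have hyz : y ≤ z := (hF.le_iff_le (mem_Ici.2 hy) (mem_Ici.2 hz)).1 <| by
    linarith [integral_Ioi_exp_neg_mul_pow_nonneg (n - 1) hx]
  have hfx : 0 ≤ exp (-x) * x ^ (n - 1) := by positivity
  linarith [exp_neg_mul_pow_antitoneOn (n - 1) hky (hky.trans hyz) hyz]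

/-- If `∫_x^∞ e^{-t}t^{n−1}dt ≤ (n−1)!/2`, `∫_0^y e^{-t}t^{n−1}dt ≥ (n−1)!/2` and
`∫_x^∞ e^{-t}t^{n−1}dt + ∫_0^y e^{-t}t^{n−1}dt = ∫_0^z e^{-t}t^{n−1}dt` with
`x, y, z ≥ 0`, then `e^{-x}x^{n−1} + e^{-y}y^{n−1} ≥ e^{-z}z^{n−1}`. -/
theorem mixed_boundary_superadditive (n : ℕ) (hn : 1 ≤ n) (x y z : ℝ)
    (hx : 0 ≤ x) (hy : 0 ≤ y) (hz : 0 ≤ z)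
    (hxle : ∫ t in Set.Ioi x, Real.exp (-t) * t ^ (n - 1)
      ≤ (1 / 2 : ℝ) * (Nat.factorial (n - 1) : ℝ))
    (hyge : (1 / 2 : ℝ) * (Nat.factorial (n - 1) : ℝ)
      ≤ ∫ t in (0:ℝ)..y, Real.exp (-t) * t ^ (n - 1))
    (heq : (∫ t in Set.Ioi x, Real.exp (-t) * t ^ (n - 1))
        + ∫ t in (0:ℝ)..y, Real.exp (-t) * t ^ (n - 1)
      = ∫ t in (0:ℝ)..z, Real.exp (-t) * t ^ (n - 1)) :
    Real.exp (-z) * z ^ (n - 1)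
      ≤ Real.exp (-x) * x ^ (n - 1) + Real.exp (-y) * y ^ (n - 1) :=
  mixed_boundary_superadditive_general n x y z hx hy hz hyge heq
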